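/- A countable collection C = {L_1, L_2, ...} of infinite languages over U can be exhaustively generated in the limit by some algorithm if and only if C satisfies Weak Angluin's Condition with Existence. -/

import Mathlib

/-! STATEMENT 9: A countable collection C = {L_1, L_2, ...} of infinite languages over U can be exhaustively generated in the limit by some algorithm iff C satisfies Weak Angluin's Condition with Existence. -/

/-- `x` is an enumeration of the language `K`. -/
def IsEnumerationOf {U : Type} (K : Set U) (x : ℕ → U) : Prop :=
  (∀ t, x t ∈ K) ∧ ∀ w ∈ K, ∃ t, x t = w

/-- The set `S_t` of distinct strings among the first `t` inputs. -/
def seen {U : Type} (x : ℕ → U) (t : ℕ) : Set U := x '' {i | i < t}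

/-- The input prefix `(x_1, ..., x_t)` as a list. -/
def inputList {U : Type} (x : ℕ → U) (t : ℕ) : List U :=
  List.ofFn (fun i : Fin t => x i)

/-- `Z_{<t}`: the distinct strings among `G_1(1), ..., G_{t-1}(1)`. -/
def ZltSet {U : Type} (A : List U → ℕ → U) (x : ℕ → U) (t : ℕ) : Set U :=
  (fun s => A (inputList x s) 0) '' {s | 1 ≤ s ∧ s < t}

/-- `Z_{≥t}`: the distinct strings in `G_t(1), G_t(2), ...`. -/
def ZgeSet {U : Type} (A : List U → ℕ → U) (x : ℕ → U) (t : ℕ) : Set U :=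
  Set.range (A (inputList x t))

/-- The algorithm `A` exhaustively generates in the limit from the collection `C`. -/
def ExhaustivelyGenerates {U : Type} (A : List U → ℕ → U) (C : Set (Set U)) : Prop :=
  ∀ K ∈ C, ∀ x : ℕ → U, IsEnumerationOf K x →
    ∃ tstar : ℕ, ∀ t : ℕ, tstar ≤ t →
      (ZgeSet A x t \ K).Finite ∧ K ⊆ seen x t ∪ ZltSet A x t ∪ ZgeSet A x t

/-- Weak Angluin's Condition with Existence: every L ∈ C has a finite tell-tale
T ⊆ L such that every L' ∈ C with T ⊆ L' and L' ⊊ L satisfies |L \ L'| < ∞. -/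
def WeakAngluinExistence {U : Type} (C : Set (Set U)) : Prop :=
  ∀ L ∈ C, ∃ T : Set U, T.Finite ∧ T ⊆ L ∧
    ∀ L' ∈ C, T ⊆ L' → L' ⊂ L → (L \ L').Finite


/-!
Sufficiency: with tell-tales `T i`, the generator that at time `t` enumerates the first `L i`
with `T i ⊆ S_t ⊆ L i` eventually settles on the first `L i` with `T i ⊆ K ⊆ L i`; such an `L i`
contains `K`, and by the tell-tale property `L i \ K` is finite.

Necessity: if some `M ∈ C` has no tell-tale, an adversary enumerates `M` in stages. Given the
finite set shown so far, it picks `L' ∈ C` containing it with `L' ⊊ M` and `M \ L'` infinite,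
and continues with an enumeration of `L'` until the generator is committed to `L'` up to finitely
many strings; then infinitely many strings of `M` are not covered. Interleaving the elements of
`M` between stages yields an enumeration of `M` on which exhaustiveness fails infinitely often.
-/

open Filter Set

variable {U : Type}

/-- `S_t ∪ Z_{<t} ∪ Z_{≥t}`. -/
def covered (A : List U → ℕ → U) (x : ℕ → U) (t : ℕ) : Set U :=
  seen x t ∪ ZltSet A x t ∪ ZgeSet A x t

section Enumerations

variable {K : Set U} {x : ℕ → U}

lemma IsEnumerationOf.range_eq (hx : IsEnumerationOf K x) : range x = K :=
  (range_subset_iff.2 hx.1).antisymm fun w hw => hx.2 w hw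

lemma exists_isEnumerationOf [Countable U] (hK : K.Nonempty) : ∃ x, IsEnumerationOf K x := by
  obtain ⟨x, rfl⟩ := K.to_countable.exists_eq_range hK
  exact ⟨x, mem_range_self, fun _ => id⟩

lemma IsEnumerationOf.ite_lt (hx : IsEnumerationOf K x) {y : ℕ → U} {m : ℕ}
    (hy : ∀ n < m, y n ∈ K) : IsEnumerationOf K (fun n => if n < m then y n else x (n - m)) := by
  refine ⟨fun n => ?_, fun w hw => ?_⟩
  · dsimp only
    split_ifs with hn
    exacts [hy n hn, hx.1 _]
  · obtain ⟨s, rfl⟩ := hx.2 w hw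
    exact ⟨s + m, by simp⟩

lemma seen_subset (hx : IsEnumerationOf K x) (t : ℕ) : seen x t ⊆ K :=
  image_subset_iff.2 fun n _ => hx.1 n

lemma eventually_mem_seen (hx : IsEnumerationOf K x) {a : U} (ha : a ∈ K) :
    ∀ᶠ t in atTop, a ∈ seen x t := by
  obtain ⟨s, rfl⟩ := hx.2 a ha
  filter_upwards [eventually_gt_atTop s] with t ht using ⟨s, ht, rfl⟩

lemma eventually_subset_seen_iff (hx : IsEnumerationOf K x) {T : Set U} (hT : T.Finite) :
    ∀ᶠ t in atTop, (T ⊆ seen x t ↔ T ⊆ K) := by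
  by_cases hTK : T ⊆ K
  · have hseen : ∀ᶠ t in atTop, ∀ a ∈ T, a ∈ seen x t :=
      hT.eventually_all.2 fun a ha => eventually_mem_seen hx (hTK ha)
    filter_upwards [hseen] with t ht using iff_of_true ht hTK
  · exact .of_forall fun t => iff_of_false (fun h => hTK (h.trans (seen_subset hx t))) hTK

lemma eventually_seen_subset_iff (hx : IsEnumerationOf K x) (L' : Set U) :
    ∀ᶠ t in atTop, (seen x t ⊆ L' ↔ K ⊆ L') := by
  by_cases hKL : K ⊆ L'
  · exact .of_forall fun t => iff_of_true ((seen_subset hx t).trans hKL) hKL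
  · obtain ⟨a, haK, haL⟩ := not_subset.1 hKL
    filter_upwards [eventually_mem_seen hx haK] with t ht
    exact iff_of_false (fun h => haL (h ht)) hKL

end Enumerations

lemma setOf_mem_inputList (x : ℕ → U) (t : ℕ) : {a | a ∈ inputList x t} = seen x t := by
  ext a
  simp [inputList, List.mem_ofFn, seen, Fin.exists_iff]

lemma inputList_congr {x y : ℕ → U} {t : ℕ} (h : ∀ n < t, x n = y n) :
    inputList x t = inputList y t :=
  congrArg List.ofFn (funext fun i => h i i.2)

lemma seen_congr {x y : ℕ → U} {t : ℕ} (h : ∀ n < t, x n = y n) : seen x t = seen y t :=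
  image_congr h

lemma covered_congr (A : List U → ℕ → U) {x y : ℕ → U} {t : ℕ} (h : ∀ n < t, x n = y n) :
    covered A x t = covered A y t := by
  have hZlt : ZltSet A x t = ZltSet A y t :=
    image_congr fun s hs => by rw [inputList_congr fun n hn => h n (hn.trans hs.2)]
  simp only [covered, ZgeSet, seen_congr h, hZlt, inputList_congr h]

lemma exists_forall_eq_of_prefixes {α : Type*} (ys : ℕ → ℕ → α) {ms : ℕ → ℕ}
    (hms : StrictMono ms) (hys : ∀ k, ∀ n < ms k, ys (k + 1) n = ys k n) :
    ∃ x : ℕ → α, ∀ k, ∀ n < ms k, x n = ys k n := by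
  have hagree : ∀ k k', k ≤ k' → ∀ n < ms k, ys k' n = ys k n := by
    intro k k' hkk'
    induction k', hkk' using Nat.le_induction with
    | base => exact fun _ _ => rfl
    | succ k' hkk' ih =>
      exact fun n hn => (hys k' n (hn.trans_le (hms.monotone hkk'))).trans (ih n hn)
  refine ⟨fun n => ys (n + 1) n, fun k n hn => ?_⟩
  rcases le_total k (n + 1) with hk | hk
  · exact hagree k (n + 1) hk n hn
  · exact (hagree (n + 1) k hk n ((Nat.lt_succ_self n).trans_le (hms.id_le _))).symm

lemma Nat.eventually_sInf_eq {ι : Type*} {l : Filter ι} {P : ℕ → ι → Prop} {Q : ℕ → Prop}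
    (hPQ : ∀ i, ∀ᶠ t in l, (P i t ↔ Q i)) (hQ : ∃ i, Q i) :
    ∀ᶠ t in l, sInf {i | P i t} = sInf {i | Q i} := by
  set i₀ := sInf {i | Q i}
  have hQ₀ : Q i₀ := Nat.sInf_mem hQ
  have hall : ∀ᶠ t in l, ∀ i ∈ Finset.range (i₀ + 1), (P i t ↔ Q i) :=
    (Finset.eventually_all _).2 fun i _ => hPQ i
  filter_upwards [hall] with t ht
  have hP₀ : P i₀ t := (ht i₀ (by simp)).2 hQ₀
  refine (Nat.sInf_le hP₀).antisymm (le_csInf ⟨i₀, hP₀⟩ fun i hi => ?_)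
  by_contra! hlt
  exact Nat.notMem_of_lt_sInf hlt ((ht i (by simp; omega)).1 hi)

section Sufficiency

noncomputable def tellTaleGenerator (L T : ℕ → Set U) (e : ℕ → ℕ → U) : List U → ℕ → U :=
  fun l => e (sInf {i | T i ⊆ {a | a ∈ l} ∧ {a | a ∈ l} ⊆ L i})

variable {L T : ℕ → Set U} {e : ℕ → ℕ → U}

lemma ZgeSet_tellTaleGenerator (he : ∀ i, IsEnumerationOf (L i) (e i)) (x : ℕ → U) (t : ℕ) :
    ZgeSet (tellTaleGenerator L T e) x t = L (sInf {i | T i ⊆ seen x t ∧ seen x t ⊆ L i}) := by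
  rw [ZgeSet, tellTaleGenerator, setOf_mem_inputList, (he _).range_eq]

lemma exhaustivelyGenerates_tellTaleGenerator (he : ∀ i, IsEnumerationOf (L i) (e i))
    (hT : ∀ i, (T i).Finite) (hTL : ∀ i, T i ⊆ L i)
    (htell : ∀ i, ∀ L' ∈ range L, T i ⊆ L' → L' ⊂ L i → (L i \ L').Finite) :
    ExhaustivelyGenerates (tellTaleGenerator L T e) (range L) := by
  rintro _ ⟨j, rfl⟩ x hx
  set i₀ := sInf {i | T i ⊆ L j ∧ L j ⊆ L i}
  have hj : T j ⊆ L j ∧ L j ⊆ L j := ⟨hTL j, subset_rfl⟩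
  have hi₀ : T i₀ ⊆ L j ∧ L j ⊆ L i₀ :=
    Nat.sInf_mem (s := {i | T i ⊆ L j ∧ L j ⊆ L i}) ⟨j, hj⟩
  have hsettle : ∀ᶠ t in atTop, ZgeSet (tellTaleGenerator L T e) x t = L i₀ := by
    have hconsistent : ∀ i, ∀ᶠ t in atTop,
        (T i ⊆ seen x t ∧ seen x t ⊆ L i ↔ T i ⊆ L j ∧ L j ⊆ L i) := fun i =>
      ((eventually_subset_seen_iff hx (hT i)).and (eventually_seen_subset_iff hx (L i))).mono
        fun _ h => and_congr h.1 h.2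
    filter_upwards [Nat.eventually_sInf_eq hconsistent ⟨j, hj⟩] with t ht
    rw [ZgeSet_tellTaleGenerator he, ht]
  obtain ⟨t₀, ht₀⟩ := eventually_atTop.1 hsettle
  refine ⟨t₀, fun t ht => ?_⟩
  rw [ht₀ t ht]
  refine ⟨?_, hi₀.2.trans subset_union_right⟩
  rcases hi₀.2.eq_or_ssubset with h | h
  · simp [h]
  · exact htell i₀ _ ⟨j, rfl⟩ hi₀.1 h

end Sufficiency

section Necessity

variable {C : Set (Set U)} {A : List U → ℕ → U} {M : Set U}

lemma ExhaustivelyGenerates.eventually_not_subset_covered (hA : ExhaustivelyGenerates A C)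
    {K : Set U} (hK : K ∈ C) {z : ℕ → U} (hz : IsEnumerationOf K z) (hMK : (M \ K).Infinite) :
    ∀ᶠ t in atTop, ¬ M ⊆ covered A z t := by
  obtain ⟨t₀, ht₀⟩ := hA K hK z hz
  filter_upwards [eventually_ge_atTop t₀] with t ht hMt
  have hfin : (seen z t ∪ ZltSet A z t ∪ (ZgeSet A z t \ K)).Finite :=
    (((finite_Iio t).image z).union ((finite_Iio t).subset (fun s hs => hs.2) |>.image _)).union
      (ht₀ t ht).1
  exact hMK (hfin.subset fun w hw => (hMt hw.1).imp_right fun h => ⟨h, hw.2⟩)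

/-- One stage of the adversary: keep the prefix of length `m`, show `b`, and run past a time at
which part of `M` is not covered. -/
lemma exists_extension_not_subset_covered [Countable U] (hA : ExhaustivelyGenerates A C)
    (hC : ∀ K ∈ C, K.Nonempty)
    (hM : ∀ T : Set U, T.Finite → T ⊆ M → ∃ L' ∈ C, T ⊆ L' ∧ L' ⊂ M ∧ (M \ L').Infinite)
    {y : ℕ → U} (hy : ∀ n, y n ∈ M) (m : ℕ) {b : U} (hb : b ∈ M) :
    ∃ z : ℕ → U, (∀ n, z n ∈ M) ∧ (∀ n < m, z n = y n) ∧
      ∃ t, m < t ∧ b ∈ seen z t ∧ ¬ M ⊆ covered A z t := by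
  obtain ⟨L', hL'C, hTL', hL'M, hML'⟩ := hM (insert b (y '' Iio m))
    (((finite_Iio m).image y).insert b) (insert_subset hb (image_subset_iff.2 fun n _ => hy n))
  obtain ⟨f, hf⟩ := exists_isEnumerationOf (hC L' hL'C)
  have hz := hf.ite_lt fun n hn => hTL' (mem_insert_of_mem _ ⟨n, hn, rfl⟩)
  obtain ⟨t, ht⟩ := ((eventually_gt_atTop m).and
    ((eventually_mem_seen hz (hTL' (mem_insert _ _))).and
      (hA.eventually_not_subset_covered hL'C hz hML'))).exists
  exact ⟨_, fun n => hL'M.subset (hz.1 n), fun n hn => if_pos hn, t, ht⟩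

lemma exists_isEnumerationOf_frequently_not_subset_covered [Countable U]
    (hA : ExhaustivelyGenerates A C) (hC : ∀ K ∈ C, K.Nonempty)
    (hM : ∀ T : Set U, T.Finite → T ⊆ M → ∃ L' ∈ C, T ⊆ L' ∧ L' ⊂ M ∧ (M \ L').Infinite)
    (hMne : M.Nonempty) :
    ∃ x, IsEnumerationOf M x ∧ ∀ k, ∃ t, k ≤ t ∧ ¬ M ⊆ covered A x t := by
  obtain ⟨u, hu⟩ := exists_isEnumerationOf hMne
  -- A stage is an `M`-valued sequence whose prefix of the recorded length is final.
  have hstep : ∀ (k : ℕ) (s : {y : ℕ → U // ∀ n, y n ∈ M} × ℕ),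
      ∃ s' : {y : ℕ → U // ∀ n, y n ∈ M} × ℕ, (∀ n < s.2, s'.1.1 n = s.1.1 n) ∧ s.2 < s'.2 ∧
        u k ∈ seen s'.1.1 s'.2 ∧ ¬ M ⊆ covered A s'.1.1 s'.2 := by
    rintro k ⟨⟨y, hy⟩, m⟩
    obtain ⟨z, hzM, hzy, t, ht⟩ := exists_extension_not_subset_covered hA hC hM hy m (hu.1 k)
    exact ⟨(⟨z, hzM⟩, t), hzy, ht⟩
  choose F hFagree hFlt hFseen hFcov using hstep
  let stage : ℕ → {y : ℕ → U // ∀ n, y n ∈ M} × ℕ := fun k => Nat.rec (⟨u, hu.1⟩, 0) F k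
  have hmono : StrictMono fun k => (stage k).2 := strictMono_nat_of_lt_succ fun k => hFlt k _
  obtain ⟨x, hx⟩ := exists_forall_eq_of_prefixes (fun k => (stage k).1.1) hmono
    fun k => hFagree k (stage k)
  refine ⟨x, ⟨fun n => ?_, fun w hw => ?_⟩, fun k => ⟨_, k.le_succ.trans (hmono.id_le _), ?_⟩⟩
  · rw [hx (n + 1) n ((Nat.lt_succ_self n).trans_le (hmono.id_le _))]
    exact (stage (n + 1)).1.2 n
  · obtain ⟨k, rfl⟩ := hu.2 w hw
    obtain ⟨n, -, hn⟩ := seen_congr (hx (k + 1)) ▸ hFseen k (stage k)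
    exact ⟨n, hn⟩
  · rw [covered_congr A (hx (k + 1))]
    exact hFcov k (stage k)

lemma ExhaustivelyGenerates.weakAngluinExistence [Countable U] (hA : ExhaustivelyGenerates A C)
    (hC : ∀ K ∈ C, K.Nonempty) : WeakAngluinExistence C := by
  intro M hMC
  by_contra! hM
  obtain ⟨x, hx, hfail⟩ := exists_isEnumerationOf_frequently_not_subset_covered hA hC
    (fun T hT hTM => by simpa only [← Set.not_finite] using hM T hT hTM) (hC M hMC)
  obtain ⟨t₀, ht₀⟩ := hA M hMC x hx
  obtain ⟨t, ht, hnot⟩ := hfail t₀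
  exact hnot (ht₀ t ht).2

end Necessity

theorem exhaustive_generation_characterization_general
    (U : Type) [Countable U]
    (L : ℕ → Set U) (hL : ∀ i, (L i).Infinite) :
    (∃ A : List U → ℕ → U, ExhaustivelyGenerates A (Set.range L)) ↔
      WeakAngluinExistence (Set.range L) := by
  refine ⟨fun ⟨A, hA⟩ => hA.weakAngluinExistence (forall_mem_range.2 fun i => (hL i).nonempty),
    fun hW => ?_⟩
  choose T hT hTL htell using fun i => hW (L i) ⟨i, rfl⟩
  choose e he using fun i => exists_isEnumerationOf (hL i).nonempty
  exact ⟨_, exhaustivelyGenerates_tellTaleGenerator he hT hTL htell⟩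

theorem exhaustive_generation_characterization
    (U : Type) [Countable U] [Infinite U]
    (L : ℕ → Set U) (hL : ∀ i, (L i).Infinite) :
    (∃ A : List U → ℕ → U, ExhaustivelyGenerates A (Set.range L)) ↔
      WeakAngluinExistence (Set.range L) :=
  exhaustive_generation_characterization_general U L hL
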